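/- arXiv:2007.04407 — 2 statements merged into one kernel-verified Lean document; each statement's English description precedes it below -/
import Mathlib

section
/- Let n and N be integers with 4 ≤ n ≤ N. Then (n−1)·cot(π/N) ≤ 2(N−1)·cot(π/n). (Equivalently, with maximal string-barrier length R̄_s > 0 and ρ̄_ac = (R̄_s/2)·cot(π/N): the quantity (ρ̄_ac/(N−1))·(n−1)/2 is at most (R̄_s/2)·cot(π/n).) This is the key quantitative inequality underlying the paper's Lemma on DBSCAN cluster radii. -/
/-!
Compare both cotangents with their pole at `0`: `cot x ≤ 1/x` for the smaller angle `π/N`,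
and `cot x ≥ 1/x - x/2` (from `sin x ≤ x`, `cos x ≥ 1 - x²/2`) for the larger angle `π/n`.
After clearing denominators and using `π² ≤ 10`, what remains is the polynomial inequality
`(n - 1) n N + 10 (N - 1) ≤ 2 (N - 1) n²`, whose slack is nondecreasing in `N` and equals
`(n - 1)(n² - 10) ≥ 0` at `N = n`.
-/

open Real

namespace Real

lemma mul_cos_le_sin {x : ℝ} (hx₀ : 0 < x) (hxπ : x < π) : x * cos x ≤ sin x := by
  rcases lt_or_ge x (π / 2) with hx | hx
  · have hcos : 0 < cos x := cos_pos_of_mem_Ioo ⟨by linarith [pi_pos], hx⟩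
    have htan : x < sin x / cos x := tan_eq_sin_div_cos x ▸ lt_tan hx₀ hx
    exact ((lt_div_iff₀ hcos).1 htan).le
  · have hcos : cos x ≤ 0 := cos_nonpos_of_pi_div_two_le_of_le hx (by linarith [pi_pos])
    nlinarith [sin_pos_of_pos_of_lt_pi hx₀ hxπ]

lemma cot_le_inv {x : ℝ} (hx₀ : 0 < x) (hxπ : x < π) : cot x ≤ x⁻¹ := by
  rw [cot_eq_cos_div_sin, div_le_iff₀ (sin_pos_of_pos_of_lt_pi hx₀ hxπ), ← div_eq_inv_mul,
    le_div_iff₀ hx₀, mul_comm]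
  exact mul_cos_le_sin hx₀ hxπ

lemma inv_sub_half_le_cot {x : ℝ} (hx₀ : 0 < x) (hx : x ^ 2 ≤ 2) : x⁻¹ - x / 2 ≤ cot x := by
  have hxπ : x < π := by nlinarith [pi_gt_three]
  have hsin : 0 < sin x := sin_pos_of_pos_of_lt_pi hx₀ hxπ
  have hcos : 1 - x ^ 2 / 2 ≤ cos x := one_sub_sq_div_two_le_cos
  have hsin_le : sin x * (1 - x ^ 2 / 2) ≤ x * (1 - x ^ 2 / 2) :=
    mul_le_mul_of_nonneg_right (sin_le hx₀.le) (by linarith)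
  calc x⁻¹ - x / 2 = (1 - x ^ 2 / 2) / x := by field_simp
    _ ≤ cos x / sin x := by rw [div_le_div_iff₀ hx₀ hsin]; nlinarith
    _ = cot x := (cot_eq_cos_div_sin x).symm

end Real

lemma sub_one_mul_le_two_mul_sub_one_mul_sq_sub {n N c : ℝ} (hn : 4 ≤ n) (hnN : n ≤ N)
    (hc : c ≤ 10) : (n - 1) * n * N ≤ 2 * (N - 1) * (n ^ 2 - c / 2) := by
  have hslack : (n - 1) * (n ^ 2 - 10) ≤ N * (n ^ 2 + n - 10) - 2 * n ^ 2 + 10 := by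
    nlinarith [mul_le_mul_of_nonneg_right hnN (by nlinarith : (0 : ℝ) ≤ n ^ 2 + n - 10)]
  nlinarith [mul_nonneg (by linarith : (0 : ℝ) ≤ n - 1) (by nlinarith : (0 : ℝ) ≤ n ^ 2 - 10),
    mul_le_mul_of_nonneg_left hc (by linarith : (0 : ℝ) ≤ N - 1)]

/-- Key quantitative inequality underlying the paper's Lemma on DBSCAN cluster radii:
for integers `4 ≤ n ≤ N`, `(n−1)·cot(π/N) ≤ 2(N−1)·cot(π/n)`. -/
theorem dbscan_cluster_radius_ineq (n N : ℕ) (h4 : 4 ≤ n) (hnN : n ≤ N) :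
    ((n : ℝ) - 1) * Real.cot (π / N) ≤ 2 * ((N : ℝ) - 1) * Real.cot (π / n) := by
  have hn : (4 : ℝ) ≤ n := by exact_mod_cast h4
  have hN : (n : ℝ) ≤ N := by exact_mod_cast hnN
  have hN₀ : (0 : ℝ) < N := by linarith
  have hπN : π / N < π := div_lt_self pi_pos (by linarith)
  have hπn_sq : (π / n) ^ 2 ≤ 2 := by
    rw [div_pow, div_le_iff₀ (by positivity)]; nlinarith [pi_lt_d2, pi_pos]
  have hpoly := sub_one_mul_le_two_mul_sub_one_mul_sq_sub (c := π ^ 2) hn hN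
    (by nlinarith [pi_lt_d2, pi_pos])
  calc ((n : ℝ) - 1) * cot (π / N) ≤ (n - 1) * (π / N)⁻¹ := by
        gcongr
        · linarith
        · exact cot_le_inv (by positivity) hπN
    _ ≤ 2 * (N - 1) * ((π / n)⁻¹ - π / n / 2) := by
        rw [← mul_le_mul_iff_of_pos_right (by positivity : 0 < π * n)]
        refine (Eq.le ?_).trans (hpoly.trans_eq ?_) <;> field_simp
    _ ≤ 2 * (N - 1) * cot (π / n) := by
        gcongr
        · linarith
        · exact inv_sub_half_le_cot (by positivity) hπn_sq
end

section
/- Let N_d and N_ac be positive integers, let n_1, …, n_{N_ac} be positive integers with n_1 + ⋯ + n_{N_ac} = N_d, and let δ ∈ {0,1}^{N_d × N_ac} satisfy: (i) Σ_{k=1}^{N_ac} δ_{jk} = 1 for every j ∈ {1,…,N_d}; (ii) Σ_{j=1}^{N_d} δ_{jk} = n_k for every k ∈ {1,…,N_ac}; and (iii) Σ_{j=1}^{N_d−1} δ_{jk}·δ_{(j+1)k} ≥ n_k − 1 for every k. Then for every k, the set S_k = { j : δ_{jk} = 1 } is an interval of consecutive integers of cardinality n_k, and the sets S_1, …, S_{N_ac}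 partition {1, …, N_d}. -/
/-! Since `δ` is `0/1`-valued, each constraint sum counts a set: (i) says every defender lies in
exactly one `S_k`, (ii) that `#S_k = n k`, and (iii) that `S_k` contains at least `#S_k - 1`
pairs `j, j + 1`, which only an interval can. -/

open Finset

namespace Finset

theorem Icc_subset_of_succ_mem {S : Finset ℕ} {a b : ℕ} (ha : a ∈ S)
    (hsucc : ∀ j ∈ S, j < b → j + 1 ∈ S) : Icc a b ⊆ S := by
  suffices ∀ x, a ≤ x → x ≤ b → x ∈ S from fun x hx => this x (mem_Icc.1 hx).1 (mem_Icc.1 hx).2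
  intro x hax
  induction x, hax using Nat.le_induction with
  | base => exact fun _ => ha
  | succ x _ ih => exact fun hxb => hsucc x (ih (by omega)) (by omega)

/-- Every `j ∈ S` with `j + 1 ∈ S` lies below `max S`, so the count forces all elements of `S`
but the maximum to have their successor in `S`. -/
theorem exists_eq_Icc_of_card_sub_one_le_card_filter_succ_mem (S : Finset ℕ)
    (h : #S - 1 ≤ #(S.filter (· + 1 ∈ S))) : ∃ a b : ℕ, S = Icc a b := by
  rcases S.eq_empty_or_nonempty with rfl | hS
  · exact ⟨1, 0, rfl⟩
  have hsub : S.filter (· + 1 ∈ S) ⊆ S.erase (S.max' hS) := fun j hj => by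
    obtain ⟨hjS, hj1⟩ := mem_filter.1 hj
    exact mem_erase.2 ⟨by have := S.le_max' _ hj1; omega, hjS⟩
  have heq := eq_of_subset_of_card_le hsub (by rwa [card_erase_of_mem (S.max'_mem hS)])
  refine ⟨S.min' hS, S.max' hS, subset_antisymm
    (fun x hx => mem_Icc.2 ⟨S.min'_le x hx, S.le_max' x hx⟩)
    (Icc_subset_of_succ_mem (S.min'_mem hS) fun j hj hlt => ?_)⟩
  have hj : j ∈ S.filter (· + 1 ∈ S) := heq ▸ mem_erase.2 ⟨hlt.ne, hj⟩
  exact (mem_filter.1 hj).2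

theorem sum_eq_card_filter_eq_one {ι : Type*} {s : Finset ι} {f : ι → ℕ}
    (hf : ∀ i ∈ s, f i = 0 ∨ f i = 1) : ∑ i ∈ s, f i = #(s.filter (f · = 1)) := by
  rw [card_filter]
  refine sum_congr rfl fun i hi => ?_
  rcases hf i hi with h | h <;> simp [h]

theorem sum_mul_succ_eq_card_filter_succ_mem {f : ℕ → ℕ} {N : ℕ}
    (hf : ∀ j ∈ Icc 1 N, f j = 0 ∨ f j = 1) :
    ∑ j ∈ Icc 1 (N - 1), f j * f (j + 1) =
      #(((Icc 1 N).filter (f · = 1)).filter (· + 1 ∈ (Icc 1 N).filter (f · = 1))) := by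
  have hprod : ∀ j ∈ Icc 1 (N - 1), f j * f (j + 1) = 0 ∨ f j * f (j + 1) = 1 := by
    intro j hj
    obtain ⟨hj1, hjN⟩ := mem_Icc.1 hj
    rcases hf j (mem_Icc.2 ⟨hj1, by omega⟩) with h | h <;>
      rcases hf (j + 1) (mem_Icc.2 ⟨by omega, by omega⟩) with h' | h' <;> simp [h, h']
  rw [sum_eq_card_filter_eq_one hprod]
  congr 1
  ext j
  simp only [mem_filter, mem_Icc, mul_eq_one]
  omega

end Finset

theorem c2gap_connectivity_general (Nd Nac : ℕ)
    (n : ℕ → ℕ)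
    (δ : ℕ → ℕ → ℕ)
    (hbin : ∀ j ∈ Finset.Icc 1 Nd, ∀ k ∈ Finset.Icc 1 Nac, δ j k = 0 ∨ δ j k = 1)
    (h1 : ∀ j ∈ Finset.Icc 1 Nd, ∑ k ∈ Finset.Icc 1 Nac, δ j k = 1)
    (h2 : ∀ k ∈ Finset.Icc 1 Nac, ∑ j ∈ Finset.Icc 1 Nd, δ j k = n k)
    (h3 : ∀ k ∈ Finset.Icc 1 Nac,
      n k - 1 ≤ ∑ j ∈ Finset.Icc 1 (Nd - 1), δ j k * δ (j + 1) k) :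
    (∀ k ∈ Finset.Icc 1 Nac,
      (∃ a b : ℕ, (Finset.Icc 1 Nd).filter (fun j => δ j k = 1) = Finset.Icc a b) ∧
      ((Finset.Icc 1 Nd).filter (fun j => δ j k = 1)).card = n k) ∧
    (∀ k ∈ Finset.Icc 1 Nac, ∀ k' ∈ Finset.Icc 1 Nac, k ≠ k' →
      Disjoint ((Finset.Icc 1 Nd).filter (fun j => δ j k = 1))
        ((Finset.Icc 1 Nd).filter (fun j => δ j k' = 1))) ∧
    (Finset.Icc 1 Nac).biUnion (fun k => (Finset.Icc 1 Nd).filter (fun j => δ j k = 1)) =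
      Finset.Icc 1 Nd := by
  have hcard : ∀ k ∈ Icc 1 Nac, #((Icc 1 Nd).filter (δ · k = 1)) = n k := fun k hk =>
    (sum_eq_card_filter_eq_one fun j hj => hbin j hj k hk).symm.trans (h2 k hk)
  have hunique : ∀ j ∈ Icc 1 Nd, #((Icc 1 Nac).filter (δ j · = 1)) = 1 := fun j hj =>
    (sum_eq_card_filter_eq_one (hbin j hj)).symm.trans (h1 j hj)
  refine ⟨fun k hk => ⟨exists_eq_Icc_of_card_sub_one_le_card_filter_succ_mem _ ?_, hcard k hk⟩,
    fun k hk k' hk' hne => disjoint_left.2 fun j hj hj' => hne ?_, ?_⟩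
  · rw [hcard k hk, ← sum_mul_succ_eq_card_filter_succ_mem fun j hj => hbin j hj k hk]
    exact h3 k hk
  · obtain ⟨hjN, hjk⟩ := mem_filter.1 hj
    exact card_le_one.1 (hunique j hjN).le k (mem_filter.2 ⟨hk, hjk⟩) k'
      (mem_filter.2 ⟨hk', (mem_filter.1 hj').2⟩)
  · refine subset_antisymm (biUnion_subset.2 fun _ _ => filter_subset _ _) fun j hj => ?_
    obtain ⟨k, hk⟩ := card_pos.1 (hunique j hj ▸ Nat.one_pos)
    obtain ⟨hkN, hjk⟩ := mem_filter.1 hk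
    exact mem_biUnion.2 ⟨k, hkN, mem_filter.2 ⟨hj, hjk⟩⟩

/-- The C2GAP constraints force a valid connected assignment: if the binary variables
`δ j k` (defenders `j ∈ {1,…,N_d}`, swarms `k ∈ {1,…,N_ac}`) satisfy
(i) each defender is assigned to exactly one swarm,
(ii) swarm `k` receives exactly `n k` defenders (with `∑ k, n k = N_d`), and
(iii) `∑_{j=1}^{N_d−1} δ j k · δ (j+1) k ≥ n k − 1` for every `k`,
then each set `S_k = {j : δ j k = 1}` is an interval of consecutive integers of
cardinality `n k`, and the sets `S_1, …, S_{N_ac}` partition `{1, …, N_d}`. -/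
theorem c2gap_connectivity (Nd Nac : ℕ) (hNd : 0 < Nd) (hNac : 0 < Nac)
    (n : ℕ → ℕ) (hn : ∀ k ∈ Finset.Icc 1 Nac, 0 < n k)
    (hsum : ∑ k ∈ Finset.Icc 1 Nac, n k = Nd)
    (δ : ℕ → ℕ → ℕ)
    (hbin : ∀ j ∈ Finset.Icc 1 Nd, ∀ k ∈ Finset.Icc 1 Nac, δ j k = 0 ∨ δ j k = 1)
    (h1 : ∀ j ∈ Finset.Icc 1 Nd, ∑ k ∈ Finset.Icc 1 Nac, δ j k = 1)
    (h2 : ∀ k ∈ Finset.Icc 1 Nac, ∑ j ∈ Finset.Icc 1 Nd, δ j k = n k)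
    (h3 : ∀ k ∈ Finset.Icc 1 Nac,
      n k - 1 ≤ ∑ j ∈ Finset.Icc 1 (Nd - 1), δ j k * δ (j + 1) k) :
    (∀ k ∈ Finset.Icc 1 Nac,
      (∃ a b : ℕ, (Finset.Icc 1 Nd).filter (fun j => δ j k = 1) = Finset.Icc a b) ∧
      ((Finset.Icc 1 Nd).filter (fun j => δ j k = 1)).card = n k) ∧
    (∀ k ∈ Finset.Icc 1 Nac, ∀ k' ∈ Finset.Icc 1 Nac, k ≠ k' →
      Disjoint ((Finset.Icc 1 Nd).filter (fun j => δ j k = 1))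
        ((Finset.Icc 1 Nd).filter (fun j => δ j k' = 1))) ∧
    (Finset.Icc 1 Nac).biUnion (fun k => (Finset.Icc 1 Nd).filter (fun j => δ j k = 1)) =
      Finset.Icc 1 Nd :=
  c2gap_connectivity_general Nd Nac n δ hbin h1 h2 h3
end
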